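/- arXiv:1409.0176 — 8 statements merged into one kernel-verified Lean document; each statement's English description precedes it below -/
import Mathlib

section
/- In a Euclidean space, let H_α and H_β be two open half-spaces (affine half-spaces, not necessarily through the origin). There exists a point lying in both H_α and H_β, and another point lying in neither, if and only if either their bounding hyperplanes are non-parallel, or the bounding hyperplanes are parallel and one half-space contains the other. -/
lemma surj_aux {n : ℕ} (f : EuclideanSpace ℝ (Fin n) →ₗ[ℝ] ℝ) (hf : f ≠ 0) (s : ℝ) :
    ∃ x, f x = s := by
  obtain ⟨v, hv⟩ : ∃ v, f v ≠ 0 := by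
    by_contra h
    push_neg at h
    exact hf (LinearMap.ext fun x => by simpa using h x)
  exact ⟨(s / f v) • v, by simp [div_mul_cancel₀, hv]⟩

lemma ker_aux {n : ℕ} (f g : EuclideanSpace ℝ (Fin n) →ₗ[ℝ] ℝ)
    (h : ∀ u, f u = 0 → g u = 0) : ∃ r : ℝ, g = r • f := by
  by_cases hf : f = 0
  · refine ⟨0, ?_⟩
    ext x
    simpa using h x (by simp [hf])
  · obtain ⟨v, hv⟩ : ∃ v, f v ≠ 0 := by
      by_contra hc
      push_neg at hc
      exact hf (LinearMap.ext fun x => by simpa using hc x)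
    refine ⟨g v / f v, LinearMap.ext fun x => ?_⟩
    have hker : f (x - (f x / f v) • v) = 0 := by
      simp [div_mul_cancel₀, hv]
    have := h _ hker
    simp only [map_sub, map_smul, smul_eq_mul, sub_eq_zero] at this
    simp only [LinearMap.smul_apply, smul_eq_mul]
    rw [this]
    field_simp

/-- two open affine half-spaces `{f > c}` and `{g > d}` in a Euclidean
space admit a common point and a common "exterior" point iff their bounding
hyperplanes are non-parallel, or they are parallel and one half-space contains the
other. -/
theorem stmt1 {n : ℕ} (f g : EuclideanSpace ℝ (Fin n) →ₗ[ℝ] ℝ)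
    (hf : f ≠ 0) (hg : g ≠ 0) (c d : ℝ) :
    ((∃ x, c < f x ∧ d < g x) ∧ (∃ y, ¬ c < f y ∧ ¬ d < g y)) ↔
      ((¬ ∃ r : ℝ, g = r • f) ∨
        ((∃ r : ℝ, g = r • f) ∧
          ({x | c < f x} ⊆ {x | d < g x} ∨ {x | d < g x} ⊆ {x | c < f x}))) := by
  constructor
  · rintro ⟨⟨x, hx1, hx2⟩, ⟨y, hy1, hy2⟩⟩
    by_cases hpar : ∃ r : ℝ, g = r • f
    · right
      obtain ⟨r, rfl⟩ := hpar
      refine ⟨⟨r, rfl⟩, ?_⟩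
      simp only [LinearMap.smul_apply, smul_eq_mul] at hx2 hy2 ⊢
      push_neg at hy1 hy2
      rcases lt_trichotomy r 0 with hr | hr | hr
      · -- contradiction: c < f x, r * f x > d gives f x < d/r; f y ≤ c, r * f y ≤ d gives f y ≥ d/r
        exfalso
        have h1 : f x < d / r := by rwa [lt_div_iff_of_neg hr, mul_comm]
        have h2 : d / r ≤ f y := by rwa [div_le_iff_of_neg hr, mul_comm]
        linarith
      · exact absurd (by ext z; simp [hr]) hg
      · rcases le_total (d / r) c with h | h
        · left
          intro z hz
          simp only [Set.mem_setOf_eq] at hz ⊢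
          have : d / r < f z := lt_of_le_of_lt h hz
          calc d = r * (d / r) := by field_simp
            _ < r * f z := by exact (mul_lt_mul_iff_right₀ hr).2 this
        · right
          intro z hz
          simp only [Set.mem_setOf_eq] at hz ⊢
          have : d / r < f z := by rwa [div_lt_iff₀ hr, mul_comm]
          linarith
    · left; exact hpar
  · rintro (hnpar | ⟨⟨r, rfl⟩, hsub⟩)
    · -- non-parallel: find u with f u = 0, g u ≠ 0, and v with f v ≠ 0
      obtain ⟨u, hu0, hu⟩ : ∃ u, f u = 0 ∧ g u ≠ 0 := by
        by_contra h
        push_neg at h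
        exact hnpar (ker_aux f g fun z hz => by
          by_contra hgz; exact hgz (h z hz))
      obtain ⟨v, hv⟩ : ∃ v, f v ≠ 0 := by
        by_contra hc
        push_neg at hc
        exact hf (LinearMap.ext fun z => by simpa using hc z)
      -- build points hitting arbitrary (s,t)
      have key : ∀ s t : ℝ, ∃ x, f x = s ∧ g x = t := by
        intro s t
        refine ⟨((t - (s / f v) * g v) / g u) • u + (s / f v) • v, ?_, ?_⟩
        · simp [hu0, div_mul_cancel₀, hv]
        · simp only [map_add, map_smul, smul_eq_mul]
          field_simp
          ring
      obtain ⟨x, hx1, hx2⟩ := key (c + 1) (d + 1)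
      obtain ⟨y, hy1, hy2⟩ := key c d
      exact ⟨⟨x, by rw [hx1]; linarith, by rw [hx2]; linarith⟩,
             ⟨y, by rw [hy1]; simp, by rw [hy2]; simp⟩⟩
    · simp only [LinearMap.smul_apply, smul_eq_mul] at hsub ⊢
      rcases lt_trichotomy r 0 with hr | hr | hr
      · -- containment impossible; derive contradiction from hsub
        exfalso
        rcases hsub with h | h
        · obtain ⟨x, hx⟩ := surj_aux f hf (max (c + 1) (d / r))
          have h1 : c < f x := by rw [hx]; exact lt_of_lt_of_le (by linarith) (le_max_left _ _)
          have h2 : d < r * f x := h h1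
          have : f x < d / r := by rwa [lt_div_iff_of_neg hr, mul_comm]
          have : d / r ≤ f x := hx ▸ le_max_right _ _
          linarith
        · obtain ⟨y, hy⟩ := surj_aux f hf (min c (d / r - 1))
          have h2 : d < r * f y := by
            have hle : f y ≤ d / r - 1 := hy ▸ min_le_right _ _
            have h3 : f y < d / r := by linarith
            have hd : r * (d / r) = d := by rw [mul_comm, div_mul_cancel₀ _ (ne_of_lt hr)]
            nlinarith
          have h1 : c < f y := h h2
          have : f y ≤ c := hy ▸ min_le_left _ _
          linarith
      · exact absurd (by ext z; simp [hr]) hg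
      · -- r > 0: always works
        obtain ⟨x, hx⟩ := surj_aux f hf (max c (d / r) + 1)
        obtain ⟨y, hy⟩ := surj_aux f hf (min c (d / r))
        refine ⟨⟨x, ?_, ?_⟩, ⟨y, ?_, ?_⟩⟩
        · rw [hx]; exact lt_of_le_of_lt (le_max_left _ _) (by linarith)
        · rw [hx]
          have : d / r < max c (d / r) + 1 := lt_of_le_of_lt (le_max_right _ _) (by linarith)
          calc d = r * (d / r) := by field_simp
            _ < r * (max c (d / r) + 1) := (mul_lt_mul_iff_right₀ hr).2 this
        · rw [hy]; push_neg; exact min_le_left _ _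
        · rw [hy]; push_neg
          calc r * min c (d / r) ≤ r * (d / r) := (mul_le_mul_iff_right₀ hr).2 (min_le_right _ _)
            _ = d := by field_simp
end

section
/- Let Φ̄ = BCₙ (n ≥ 1) be the non-reduced root system, and let Φ = {(ᾱ, m) ∈ Λ̄ ⊕ ℤ : ᾱ ∈ Φ̄, and m odd if ᾱ is long}. If α, β ∈ Φ project to the same short root of BCₙ and α + β ∈ Φ, then (ℕα + ℕβ) ∩ Φ = {α, β, α + β}. -/
/-- standard basis vector of `ℝⁿ` -/
def eR (n : ℕ) (i : Fin n) : Fin n → ℝ := Pi.single i 1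

/-- short roots of `BCₙ`: the `±eᵢ` -/
def isShortBC {n : ℕ} (v : Fin n → ℝ) : Prop :=
  ∃ i, v = eR n i ∨ v = -eR n i

/-- middling roots of `BCₙ`: the `±eᵢ ± eⱼ`, `i ≠ j` -/
def isMidBC {n : ℕ} (v : Fin n → ℝ) : Prop :=
  ∃ i j, i ≠ j ∧ ∃ ε δ : ℝ, (ε = 1 ∨ ε = -1) ∧ (δ = 1 ∨ δ = -1) ∧
    v = ε • eR n i + δ • eR n j

/-- long roots of `BCₙ`: the `±2eᵢ` -/
def isLongBC {n : ℕ} (v : Fin n → ℝ) : Prop :=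
  ∃ i, v = (2 : ℝ) • eR n i ∨ v = -((2 : ℝ) • eR n i)

/-- the affine root system `𝐵̃𝐶ₙ^odd`: pairs `(ᾱ, m)` with `ᾱ ∈ BCₙ`, where `m`
must be odd when `ᾱ` is long -/
def affBCodd (n : ℕ) : Set ((Fin n → ℝ) × ℤ) :=
  {p | (isShortBC p.1 ∨ isMidBC p.1) ∨ (isLongBC p.1 ∧ Odd p.2)}

lemma short_vals {n : ℕ} {v : Fin n → ℝ} (h : isShortBC v) :
    ∃ i, (v i = 1 ∨ v i = -1) ∧ ∀ j, j ≠ i → v j = 0 := by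
  obtain ⟨i, h | h⟩ := h
  · exact ⟨i, Or.inl (by simp [h, eR]), fun j hj => by simp [h, eR, Pi.single_eq_of_ne hj]⟩
  · exact ⟨i, Or.inr (by simp [h, eR]), fun j hj => by simp [h, eR, Pi.single_eq_of_ne hj]⟩

lemma long_vals {n : ℕ} {v : Fin n → ℝ} (h : isLongBC v) :
    ∃ i, (v i = 2 ∨ v i = -2) ∧ ∀ j, j ≠ i → v j = 0 := by
  obtain ⟨i, h | h⟩ := h
  · exact ⟨i, Or.inl (by simp [h, eR]), fun j hj => by simp [h, eR, Pi.single_eq_of_ne hj]⟩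
  · exact ⟨i, Or.inr (by simp [h, eR]), fun j hj => by simp [h, eR, Pi.single_eq_of_ne hj]⟩

lemma scaled_short_short {n : ℕ} {v : Fin n → ℝ} (hv : isShortBC v) (c : ℕ)
    (h : isShortBC ((c : ℝ) • v)) : c = 1 := by
  obtain ⟨i, hvi, hv0⟩ := short_vals hv
  obtain ⟨j, hwj, hw0⟩ := short_vals h
  have hwj' : (c : ℝ) * v j = 1 ∨ (c : ℝ) * v j = -1 := by simpa using hwj
  rcases eq_or_ne j i with rfl | hji
  · have hc : (c : ℝ) = 1 ∨ (c : ℝ) = -1 := by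
      rcases hvi with h1 | h1 <;> rcases hwj' with h2 | h2 <;> rw [h1] at h2 <;>
        [left; right; right; left] <;> linarith
    rcases hc with hc | hc
    · exact_mod_cast hc
    · have := Nat.cast_nonneg (α := ℝ) c; linarith
  · rw [hv0 j hji, mul_zero] at hwj'
    rcases hwj' with h2 | h2 <;> linarith

lemma scaled_short_long {n : ℕ} {v : Fin n → ℝ} (hv : isShortBC v) (c : ℕ)
    (h : isLongBC ((c : ℝ) • v)) : c = 2 := by
  obtain ⟨i, hvi, hv0⟩ := short_vals hv
  obtain ⟨j, hwj, hw0⟩ := long_vals h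
  have hwj' : (c : ℝ) * v j = 2 ∨ (c : ℝ) * v j = -2 := by simpa using hwj
  rcases eq_or_ne j i with rfl | hji
  · have hc : (c : ℝ) = 2 ∨ (c : ℝ) = -2 := by
      rcases hvi with h1 | h1 <;> rcases hwj' with h2 | h2 <;> rw [h1] at h2 <;>
        [left; right; right; left] <;> linarith
    rcases hc with hc | hc
    · exact_mod_cast hc
    · have := Nat.cast_nonneg (α := ℝ) c; linarith
  · rw [hv0 j hji, mul_zero] at hwj'
    rcases hwj' with h2 | h2 <;> linarith

lemma scaled_short_not_mid {n : ℕ} {v : Fin n → ℝ} (hv : isShortBC v) (c : ℕ)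
    (h : isMidBC ((c : ℝ) • v)) : False := by
  obtain ⟨i, _, hv0⟩ := short_vals hv
  obtain ⟨j, k, hjk, ε, δ, hε, hδ, hw⟩ := h
  have hwj : (c : ℝ) * v j = ε := by
    have := congrFun hw j
    simpa [eR, Pi.single_eq_of_ne hjk] using this
  have hwk : (c : ℝ) * v k = δ := by
    have := congrFun hw k
    simpa [eR, Pi.single_eq_of_ne hjk.symm] using this
  rcases eq_or_ne j i with rfl | hji
  · rw [hv0 k hjk.symm, mul_zero] at hwk
    rcases hδ with h1 | h1 <;> rw [h1] at hwk <;> linarith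
  · rw [hv0 j hji, mul_zero] at hwj
    rcases hε with h1 | h1 <;> rw [h1] at hwj <;> linarith

/-- if `α, β ∈ 𝐵̃𝐶ₙ^odd` project to the same short root of `BCₙ` and
`α + β` is a root, then `(ℕα + ℕβ) ∩ Φ = {α, β, α + β}`. -/
theorem stmt3 {n : ℕ} (hn : 1 ≤ n)
    (α β : (Fin n → ℝ) × ℤ) (hα : α ∈ affBCodd n) (hβ : β ∈ affBCodd n)
    (hproj : α.1 = β.1) (hshort : isShortBC α.1)
    (hsum : α + β ∈ affBCodd n) :
    {p ∈ affBCodd n | ∃ m k : ℕ, p = m • α + k • β} = {α, β, α + β} := by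
  ext p
  simp only [Set.mem_setOf_eq, Set.mem_insert_iff, Set.mem_singleton_iff]
  constructor
  · rintro ⟨hp, m, k, rfl⟩
    have h1 : (m • α + k • β).1 = ((m + k : ℕ) : ℝ) • α.1 := by
      show m • α.1 + k • β.1 = _
      rw [← hproj, ← Nat.cast_smul_eq_nsmul ℝ m α.1, ← Nat.cast_smul_eq_nsmul ℝ k α.1]
      rw [Nat.cast_add, add_smul]
    rcases hp with (hs | hm) | ⟨hl, hodd⟩
    · rw [h1] at hs
      have hc := scaled_short_short hshort _ hs
      have hmk : m = 1 ∧ k = 0 ∨ m = 0 ∧ k = 1 := by omega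
      rcases hmk with ⟨rfl, rfl⟩ | ⟨rfl, rfl⟩
      · left; simp
      · right; left; simp
    · rw [h1] at hm
      exact absurd hm (fun hh => scaled_short_not_mid hshort _ hh)
    · rw [h1] at hl
      have hc := scaled_short_long hshort _ hl
      have h2 : (m • α + k • β).2 = (m : ℤ) * α.2 + (k : ℤ) * β.2 := by
        show m • α.2 + k • β.2 = _
        simp [nsmul_eq_mul]
      have hmk : m = 2 ∧ k = 0 ∨ m = 1 ∧ k = 1 ∨ m = 0 ∧ k = 2 := by omega
      rcases hmk with ⟨rfl, rfl⟩ | ⟨rfl, rfl⟩ | ⟨rfl, rfl⟩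
      · exfalso
        rw [h2] at hodd
        simp at hodd
        exact (Int.not_odd_iff_even.mpr ⟨α.2, by ring⟩) hodd
      · right; right; simp
      · exfalso
        rw [h2] at hodd
        simp at hodd
        exact (Int.not_odd_iff_even.mpr ⟨β.2, by ring⟩) hodd
  · rintro (rfl | rfl | rfl)
    · exact ⟨hα, 1, 0, by simp⟩
    · exact ⟨hβ, 0, 1, by simp⟩
    · exact ⟨hsum, 1, 1, by simp⟩
end

section
/- In the root system A₂ (or more generally ADE), for every root ᾱ there exist roots γ̄, δ̄ with γ̄ + δ̄ = ᾱ and such that ᾱ + γ̄ and ᾱ + δ̄ are not roots. -/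
/-- in an irreducible simply-laced finite root system of rank ≥ 2
(type ADE), every root `a` can be written as `a = c + d` with `c, d` roots such that
`a + c` and `a + d` are not roots. -/
theorem stmt5 {n : ℕ} (Φb : Set (EuclideanSpace ℝ (Fin n)))
    (hfin : Φb.Finite) (h0 : (0 : EuclideanSpace ℝ (Fin n)) ∉ Φb)
    (hneg : ∀ a ∈ Φb, -a ∈ Φb)
    (hred : ∀ a ∈ Φb, ∀ r : ℝ, r • a ∈ Φb → r = 1 ∨ r = -1)
    (hrefl : ∀ a ∈ Φb, ∀ b ∈ Φb,
      b - ((2 * (inner ℝ a b : ℝ) / (inner ℝ a a : ℝ)) • a) ∈ Φb)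
    (hcrys : ∀ a ∈ Φb, ∀ b ∈ Φb, ∃ k : ℤ, 2 * (inner ℝ a b : ℝ) = k * (inner ℝ a a : ℝ))
    (hlaced : ∀ a ∈ Φb, ∀ b ∈ Φb, (inner ℝ a a : ℝ) = (inner ℝ b b : ℝ))
    (hirr : ¬ ∃ S T : Set (EuclideanSpace ℝ (Fin n)), S.Nonempty ∧ T.Nonempty ∧
      S ∪ T = Φb ∧ S ∩ T = ∅ ∧ ∀ s ∈ S, ∀ t ∈ T, (inner ℝ s t : ℝ) = 0)
    (hrank : ∃ a ∈ Φb, ∃ b ∈ Φb, LinearIndependent ℝ ![a, b]) :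
    ∀ a ∈ Φb, ∃ c ∈ Φb, ∃ d ∈ Φb, c + d = a ∧ a + c ∉ Φb ∧ a + d ∉ Φb := by
  intro a ha
  have ha0 : a ≠ 0 := fun h => h0 (h ▸ ha)
  have haN : (0:ℝ) < inner ℝ a a := by
    have h1 : 0 < ‖a‖ := norm_pos_iff.mpr ha0
    rw [real_inner_self_eq_norm_mul_norm]; positivity
  set N : ℝ := inner ℝ a a with hN
  -- Step 1: find b with 2⟪a,b⟫ = ⟪a,a⟫
  have hb : ∃ b ∈ Φb, 2 * (inner ℝ a b : ℝ) = N := by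
    by_contra hc
    push_neg at hc
    apply hirr
    refine ⟨{a, -a}, Φb \ {a, -a}, ⟨a, by simp⟩, ?_, ?_, ?_, ?_⟩
    · -- T nonempty
      obtain ⟨x, hx, y, hy, hxy⟩ := hrank
      by_contra hT
      rw [Set.not_nonempty_iff_eq_empty, Set.diff_eq_empty] at hT
      have hx' := hT hx
      have hy' := hT hy
      rw [LinearIndependent.pair_iff] at hxy
      rcases hx' with hx' | (hx' : x = -a) <;> rcases hy' with hy' | (hy' : y = -a)
      · exact one_ne_zero ((hxy 1 (-1) (by rw [hx', hy']; module)).1)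
      · exact one_ne_zero ((hxy 1 1 (by rw [hx', hy']; module)).1)
      · exact one_ne_zero ((hxy 1 1 (by rw [hx', hy']; module)).1)
      · exact one_ne_zero ((hxy 1 (-1) (by rw [hx', hy']; module)).1)
    · -- union
      apply Set.union_diff_cancel
      intro z hz
      rcases hz with rfl | rfl
      · exact ha
      · exact hneg a ha
    · ext z; simp
    · intro s hs t ht
      have htΦ : t ∈ Φb := ht.1
      have hta : t ≠ a := fun h => ht.2 (by simp [h])
      have htna : t ≠ -a := fun h => ht.2 (by simp [h])
      have key : (inner ℝ a t : ℝ) = 0 := by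
        obtain ⟨k, hk⟩ := hcrys a ha t htΦ
        have hnorm : (inner ℝ t t : ℝ) = N := (hlaced a ha t htΦ).symm
        have hnt : ‖t‖ = ‖a‖ := by
          have h1 : ‖a‖ * ‖a‖ = ‖t‖ * ‖t‖ := by
            rw [← real_inner_self_eq_norm_mul_norm, ← real_inner_self_eq_norm_mul_norm,
              hnorm]
          nlinarith [norm_nonneg a, norm_nonneg t]
        have hcs : |(inner ℝ a t : ℝ)| ≤ N := by
          calc |(inner ℝ a t : ℝ)| ≤ ‖a‖ * ‖t‖ := abs_real_inner_le_norm a t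
          _ = ‖a‖ * ‖a‖ := by rw [hnt]
          _ = N := (real_inner_self_eq_norm_mul_norm a).symm
        have hk2 : |(k:ℝ)| ≤ 2 := by
          rw [abs_le] at hcs ⊢
          constructor <;> nlinarith
        have hkb1 : -2 ≤ k := by exact_mod_cast (abs_le.mp hk2).1
        have hkb2 : k ≤ 2 := by exact_mod_cast (abs_le.mp hk2).2
        interval_cases k
        · -- k = -2 : t = -a
          exfalso
          apply htna
          have : (inner ℝ (a + t) (a + t) : ℝ) = 0 := by
            rw [real_inner_add_add_self, hnorm, ← hN]
            push_cast at hk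
            linarith
          exact eq_neg_of_add_eq_zero_right (inner_self_eq_zero.mp this)
        · -- k = -1
          exfalso
          apply hc (-t) (hneg t htΦ)
          rw [inner_neg_right]
          push_cast at hk
          linarith
        · -- k = 0
          push_cast at hk; linarith
        · -- k = 1
          exfalso
          apply hc t htΦ
          push_cast at hk
          linarith
        · -- k = 2 : t = a
          exfalso
          apply hta
          have : (inner ℝ (a - t) (a - t) : ℝ) = 0 := by
            rw [real_inner_sub_sub_self, hnorm, ← hN]
            push_cast at hk
            linarith
          exact (sub_eq_zero.mp (inner_self_eq_zero.mp this)).symm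
      rcases hs with hs | hs
      · exact hs ▸ key
      · simp only [Set.mem_singleton_iff] at hs
        rw [hs, inner_neg_left, key, neg_zero]
  obtain ⟨b, hbΦ, hbeq⟩ := hb
  -- Step 2: d = a - b is a root
  have hd : a - b ∈ Φb := by
    have h1 := hrefl a ha b hbΦ
    have h2 : 2 * (inner ℝ a b : ℝ) / (inner ℝ a a : ℝ) = 1 := by
      rw [hbeq, ← hN]; field_simp
    rw [h2, one_smul] at h1
    have := hneg _ h1
    have heq : -(b - a) = a - b := by abel
    rwa [heq] at this
  refine ⟨b, hbΦ, a - b, hd, by abel, ?_, ?_⟩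
  · -- a + b not a root
    intro h
    have h3 := hlaced a ha (a + b) h
    rw [real_inner_add_add_self] at h3
    have hbb : (inner ℝ b b : ℝ) = N := (hlaced a ha b hbΦ).symm
    rw [hbb, ← hN] at h3
    linarith
  · -- a + (a - b) not a root
    intro h
    have h3 := hlaced a ha (a + (a - b)) h
    rw [real_inner_add_add_self, real_inner_sub_sub_self, inner_sub_right] at h3
    have hbb : (inner ℝ b b : ℝ) = N := (hlaced a ha b hbΦ).symm
    rw [hbb, ← hN] at h3
    linarith
end

section
/- Let R be a commutative ring and let G be a group with additive one-parameter subgroups X_σ, X_λ, X_{σ+λ}, X_{λ+2σ}, X_α, X_{α+σ} (each R → G a homomorphism from (R,+)) satisfying: [X_σ(t), X_λ(u)] = X_{σ+λ}(−tu) X_{λ+2σ}(t²u); [X_α(t), X_λ(u)] = 1; [X_α(t), X_{λ+2σ}(u)] = 1; [X_α(t), X_σ(u)] = X_{α+σ}(−2tu); [X_{α+σ}(t), X_λ(u)] = 1; [X_{α+σ}(t), X_σ(u)] = 1; and X_{σ+λ}, X_{λ+2σ} commute with each other and with X_σ, X_λ. Then [X_α(t), X_{σ+λ}(u)] = 1 for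 all t, u ∈ R. -/
open scoped commutatorElement

/-- B₂-type Chevalley relations, short-root case: `α + σ` is a root,
but the chains terminate, so `Xα` still commutes with `X_{σ+λ}`. -/
theorem stmt8 {R : Type*} [CommRing R] {G : Type*} [Group G]
    (Xσ Xlam Xσlam Xlam2σ Xα Xασ : R → G)
    (haddσ : ∀ t u : R, Xσ (t + u) = Xσ t * Xσ u)
    (haddlam : ∀ t u : R, Xlam (t + u) = Xlam t * Xlam u)
    (haddσlam : ∀ t u : R, Xσlam (t + u) = Xσlam t * Xσlam u)
    (haddlam2σ : ∀ t u : R, Xlam2σ (t + u) = Xlam2σ t * Xlam2σ u)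
    (haddα : ∀ t u : R, Xα (t + u) = Xα t * Xα u)
    (haddασ : ∀ t u : R, Xασ (t + u) = Xασ t * Xασ u)
    (hchev : ∀ t u : R, ⁅Xσ t, Xlam u⁆ = Xσlam (-(t * u)) * Xlam2σ (t ^ 2 * u))
    (h1 : ∀ t u : R, ⁅Xα t, Xlam u⁆ = 1)
    (h2 : ∀ t u : R, ⁅Xα t, Xlam2σ u⁆ = 1)
    (h3 : ∀ t u : R, ⁅Xα t, Xσ u⁆ = Xασ (-(2 * t * u)))
    (h4 : ∀ t u : R, ⁅Xασ t, Xlam u⁆ = 1)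
    (h5 : ∀ t u : R, ⁅Xασ t, Xσ u⁆ = 1)
    (hcomm : ∀ Z ∈ ([Xσlam, Xlam2σ] : List (R → G)),
      ∀ Y ∈ ([Xσ, Xlam, Xσlam, Xlam2σ] : List (R → G)),
      ∀ t u : R, ⁅Z t, Y u⁆ = 1) :
    ∀ t u : R, ⁅Xα t, Xσlam u⁆ = 1 := by
  intro t u
  rw [commutatorElement_eq_one_iff_commute]
  set a := Xα t with ha
  set b := Xσ (-1 : R) with hb
  set l := Xlam u with hl
  set w := Xασ (-(2 * t * (-1 : R))) with hw
  have cwb : Commute w b := commutatorElement_eq_one_iff_commute.mp (h5 _ _)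
  have cwl : Commute w l := commutatorElement_eq_one_iff_commute.mp (h4 _ _)
  have cal : Commute a l := commutatorElement_eq_one_iff_commute.mp (h1 _ _)
  have ca2 : Commute a (Xlam2σ u) := commutatorElement_eq_one_iff_commute.mp (h2 _ _)
  have hab : a * b = w * b * a := by
    have h := h3 t (-1)
    rw [commutatorElement_def] at h
    rw [hw, ← h, ha, hb]; group
  have cwc : Commute w ⁅b, l⁆ := by
    rw [commutatorElement_def]
    exact ((cwb.mul_right cwl).mul_right cwb.inv_right).mul_right cwl.inv_right
  have habinv : a * b⁻¹ = b⁻¹ * w⁻¹ * a := by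
    have : b⁻¹ * w⁻¹ * (a * b) * b⁻¹ = b⁻¹ * w⁻¹ * (w * b * a) * b⁻¹ := by rw [hab]
    calc a * b⁻¹ = b⁻¹ * w⁻¹ * (w * b * a) * b⁻¹ := by group
    _ = b⁻¹ * w⁻¹ * (a * b) * b⁻¹ := by rw [hab]
    _ = b⁻¹ * w⁻¹ * a := by group
  have key : Commute a ⁅b, l⁆ := by
    have step : a * ⁅b, l⁆ = ⁅b, l⁆ * a := by
      rw [commutatorElement_def]
      calc a * (b * l * b⁻¹ * l⁻¹)
          = (a * b) * l * b⁻¹ * l⁻¹ := by group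
        _ = (w * b * a) * l * b⁻¹ * l⁻¹ := by rw [hab]
        _ = w * b * (a * l) * b⁻¹ * l⁻¹ := by group
        _ = w * b * (l * a) * b⁻¹ * l⁻¹ := by rw [cal.eq]
        _ = w * b * l * (a * b⁻¹) * l⁻¹ := by group
        _ = w * b * l * (b⁻¹ * w⁻¹ * a) * l⁻¹ := by rw [habinv]
        _ = w * b * l * b⁻¹ * w⁻¹ * (a * l⁻¹) := by group
        _ = w * b * l * b⁻¹ * w⁻¹ * (l⁻¹ * a) := by rw [cal.inv_right.eq]
        _ = w * b * l * b⁻¹ * (w⁻¹ * l⁻¹) * a := by group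
        _ = w * b * l * b⁻¹ * (l⁻¹ * w⁻¹) * a := by rw [cwl.inv_inv.eq]
        _ = w * (b * l * b⁻¹ * l⁻¹) * w⁻¹ * a := by group
        _ = w * ⁅b, l⁆ * w⁻¹ * a := by rw [commutatorElement_def]
        _ = ⁅b, l⁆ * w * w⁻¹ * a := by rw [cwc.eq]
        _ = ⁅b, l⁆ * a := by group
    exact step
  have hdecomp : Xσlam u = ⁅b, l⁆ * (Xlam2σ u)⁻¹ := by
    have h := hchev (-1) u
    rw [show -((-1 : R) * u) = u by ring, show ((-1 : R)) ^ 2 * u = u by ring] at h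
    rw [hb, hl, h]; group
  rw [hdecomp]
  exact key.mul_right ca2.inv_right
end

section
/- Let R be a commutative ring and let G be a group with additive one-parameter subgroups X_σ, X_μ, X_{σ+μ}, X_{2σ+μ}, X_α, X_{α+σ}, X_{α+σ+μ} (homomorphisms (R,+) → G) satisfying: [X_σ(t), X_μ(u)] = X_{σ+μ}(−tu) X_{2σ+μ}(t²u); [X_α(t), X_{2σ+μ}(u)] = 1; [X_α(t), X_μ(u)] = 1; [X_α(t), X_σ(u)] = X_{α+σ}(−2tu); [X_μ(t), X_{α+σ}(u)] = X_{α+σ+μ}(−2tu); [X_{α+σ}(t), X_σ(u)] = 1; and X_{α+σ+μ}, X_{σ+μ}, X_{2σ+μ} are central among all the listed subgroups (commute with each of them). Then [X_α(t), X_{σ+μ}(u)] = X_{α+σ+μ}(4tu) for all t, u ∈ R. -/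
open scoped commutatorElement

private lemma one_param_zero {R : Type*} [AddGroup R] {G : Type*} [Group G]
    (X : R → G) (h : ∀ t u : R, X (t + u) = X t * X u) : X 0 = 1 := by
  have := h 0 0
  rw [add_zero] at this
  exact (left_eq_mul.mp this)

private lemma one_param_neg {R : Type*} [AddGroup R] {G : Type*} [Group G]
    (X : R → G) (h : ∀ t u : R, X (t + u) = X t * X u) (t : R) :
    X (-t) = (X t)⁻¹ := by
  apply eq_inv_of_mul_eq_one_left
  rw [← h, neg_add_cancel, one_param_zero X h]

/-- the commutator calculation of Case 6 (BC-type), producing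
`[Xα(t), X_{σ+μ}(u)] = X_{α+σ+μ}(4tu)`. -/
theorem stmt9 {R : Type*} [CommRing R] {G : Type*} [Group G]
    (Xσ Xμ Xσμ X2σμ Xα Xασ Xασμ : R → G)
    (haddσ : ∀ t u : R, Xσ (t + u) = Xσ t * Xσ u)
    (haddμ : ∀ t u : R, Xμ (t + u) = Xμ t * Xμ u)
    (haddσμ : ∀ t u : R, Xσμ (t + u) = Xσμ t * Xσμ u)
    (hadd2σμ : ∀ t u : R, X2σμ (t + u) = X2σμ t * X2σμ u)
    (haddα : ∀ t u : R, Xα (t + u) = Xα t * Xα u)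
    (haddασ : ∀ t u : R, Xασ (t + u) = Xασ t * Xασ u)
    (haddασμ : ∀ t u : R, Xασμ (t + u) = Xασμ t * Xασμ u)
    (hchev : ∀ t u : R, ⁅Xσ t, Xμ u⁆ = Xσμ (-(t * u)) * X2σμ (t ^ 2 * u))
    (h1 : ∀ t u : R, ⁅Xα t, X2σμ u⁆ = 1)
    (h2 : ∀ t u : R, ⁅Xα t, Xμ u⁆ = 1)
    (h3 : ∀ t u : R, ⁅Xα t, Xσ u⁆ = Xασ (-(2 * t * u)))
    (h4 : ∀ t u : R, ⁅Xμ t, Xασ u⁆ = Xασμ (-(2 * t * u)))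
    (h5 : ∀ t u : R, ⁅Xασ t, Xσ u⁆ = 1)
    (hcent : ∀ Z ∈ ([Xασμ, Xσμ, X2σμ] : List (R → G)),
      ∀ Y ∈ ([Xσ, Xμ, Xσμ, X2σμ, Xα, Xασ, Xασμ] : List (R → G)),
      ∀ t u : R, ⁅Z t, Y u⁆ = 1) :
    ∀ t u : R, ⁅Xα t, Xσμ u⁆ = Xασμ (4 * t * u) := by
  intro t u
  -- commuting facts
  have comm : ∀ Z ∈ ([Xασμ, Xσμ, X2σμ] : List (R → G)),
      ∀ Y ∈ ([Xσ, Xμ, Xσμ, X2σμ, Xα, Xασ, Xασμ] : List (R → G)),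
      ∀ v w : R, Z v * Y w = Y w * Z v := by
    intro Z hZ Y hY v w
    exact commutatorElement_eq_one_iff_mul_comm.mp (hcent Z hZ Y hY v w)
  have cσμα : ∀ v w : R, Xσμ v * Xα w = Xα w * Xσμ v :=
    comm Xσμ (by simp) Xα (by simp)
  have cσμασ : ∀ v w : R, Xσμ v * Xασ w = Xασ w * Xσμ v :=
    comm Xσμ (by simp) Xασ (by simp)
  have c2σμα : ∀ v w : R, X2σμ v * Xα w = Xα w * X2σμ v :=
    comm X2σμ (by simp) Xα (by simp)
  have c2σμασ : ∀ v w : R, X2σμ v * Xασ w = Xασ w * X2σμ v :=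
    comm X2σμ (by simp) Xασ (by simp)
  have cσμ2σμ : ∀ v w : R, Xσμ v * X2σμ w = X2σμ w * Xσμ v :=
    comm Xσμ (by simp) X2σμ (by simp)
  have cασμσμ : ∀ v w : R, Xασμ v * Xσμ w = Xσμ w * Xασμ v :=
    comm Xασμ (by simp) Xσμ (by simp)
  have cασμ2σμ : ∀ v w : R, Xασμ v * X2σμ w = X2σμ w * Xασμ v :=
    comm Xασμ (by simp) X2σμ (by simp)
  -- notation
  set a := Xα t with ha
  set b := Xσ (-1 : R) with hb
  set c := Xμ u with hc
  set d := Xασ (2 * t) with hd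
  -- e1 : b * c * b⁻¹ * c⁻¹ = Xσμ u * X2σμ u
  have e1 : b * c * b⁻¹ * c⁻¹ = Xσμ u * X2σμ u := by
    have := hchev (-1 : R) u
    rw [commutatorElement_def] at this
    have h1' : -((-1 : R) * u) = u := by ring
    have h2' : ((-1 : R) ^ 2 * u) = u := by ring
    rw [h1', h2'] at this
    exact this
  -- e2 : a * b * a⁻¹ = d * b
  have e2 : a * b * a⁻¹ = d * b := by
    have := h3 t (-1 : R)
    rw [commutatorElement_def] at this
    have h1' : -(2 * t * (-1 : R)) = 2 * t := by ring
    rw [h1'] at this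
    calc a * b * a⁻¹ = (a * b * a⁻¹ * b⁻¹) * b := by group
      _ = d * b := by rw [this]
  -- e3 : a * c * a⁻¹ = c
  have e3 : a * c * a⁻¹ = c := by
    have := h2 t u
    rw [commutatorElement_def] at this
    calc a * c * a⁻¹ = (a * c * a⁻¹ * c⁻¹) * c := by group
      _ = c := by rw [this]; group
  -- e4 : d * c * d⁻¹ * c⁻¹ = Xασμ (4 * t * u)
  have e4 : d * c * d⁻¹ * c⁻¹ = Xασμ (4 * t * u) := by
    have h4' := h4 u (2 * t)
    rw [commutatorElement_def] at h4'
    -- c * d * c⁻¹ * d⁻¹ = Xασμ (-(2 * u * (2 * t)))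
    have hneg : Xασμ (-(2 * u * (2 * t))) = (Xασμ (4 * t * u))⁻¹ := by
      have : -(2 * u * (2 * t)) = -(4 * t * u) := by ring
      rw [this, one_param_neg Xασμ haddασμ]
    rw [hneg] at h4'
    have : d * c * d⁻¹ * c⁻¹ = (c * d * c⁻¹ * d⁻¹)⁻¹ := by group
    rw [this, h4', inv_inv]
  -- main conjugation computation
  have key : a * (Xσμ u * X2σμ u) * a⁻¹ = Xσμ u * X2σμ u * Xασμ (4 * t * u) := by
    calc a * (Xσμ u * X2σμ u) * a⁻¹
        = a * (b * c * b⁻¹ * c⁻¹) * a⁻¹ := by rw [e1]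
      _ = (a * b * a⁻¹) * (a * c * a⁻¹) * (a * b * a⁻¹)⁻¹ * (a * c * a⁻¹)⁻¹ := by
          group
      _ = (d * b) * c * (d * b)⁻¹ * c⁻¹ := by rw [e2, e3]
      _ = d * (b * c * b⁻¹ * c⁻¹) * (c * d⁻¹ * c⁻¹) := by group
      _ = d * (Xσμ u * X2σμ u) * (c * d⁻¹ * c⁻¹) := by rw [e1]
      _ = Xσμ u * X2σμ u * (d * c * d⁻¹ * c⁻¹) := by
          have hsw : d * (Xσμ u * X2σμ u) = Xσμ u * X2σμ u * d := by
            rw [← mul_assoc, ← cσμασ, mul_assoc, ← c2σμασ, ← mul_assoc]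
          rw [hsw]; group
      _ = Xσμ u * X2σμ u * Xασμ (4 * t * u) := by rw [e4]
  -- remove the X2σμ factor using centrality of X2σμ w.r.t. Xα
  have key2 : a * Xσμ u * a⁻¹ = Xσμ u * Xασμ (4 * t * u) := by
    have hx : a * Xσμ u * a⁻¹ * X2σμ u = Xσμ u * Xασμ (4 * t * u) * X2σμ u := by
      have C : Commute (X2σμ u) a := c2σμα u t
      calc a * Xσμ u * a⁻¹ * X2σμ u
          = a * Xσμ u * (a⁻¹ * X2σμ u) := by group
        _ = a * Xσμ u * (X2σμ u * a⁻¹) := by rw [C.symm.inv_left.eq]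
        _ = a * (Xσμ u * X2σμ u) * a⁻¹ := by group
        _ = Xσμ u * X2σμ u * Xασμ (4 * t * u) := key
        _ = Xσμ u * Xασμ (4 * t * u) * X2σμ u := by
            rw [mul_assoc, ← cασμ2σμ, ← mul_assoc]
    exact mul_right_cancel hx
  -- conclude
  have C2 : Commute (Xασμ (4 * t * u)) (Xσμ u) := cασμσμ _ _
  rw [commutatorElement_def, key2, mul_assoc, C2.inv_right.eq]
  group
end

section
/- Let R be a commutative ring and let G be a group with additive one-parameter subgroups X_σ, X_μ, X_{σ+μ}, X_{2σ+μ}, X_α, X_{α+σ} satisfying: [X_σ(t), X_μ(u)] = X_{σ+μ}(−tu) X_{2σ+μ}(t²u); [X_α(t), X_{2σ+μ}(u)] = 1; [X_α(t), X_μ(u)] = 1; [X_α(t), X_σ(u)] = X_{α+σ}(−2tu); [X_{α+σ}(t), X_μ(u)] = 1; [X_{α+σ}(t), X_σ(u)] = 1; and X_{σ+μ}, X_{2σ+μ} commute with X_σ and X_μ and each other. Then [X_α(t), X_{σ+μ}(u)] = 1 for all t, u ∈ R. -/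
open scoped commutatorElement

/-- Case 7, where `α+σ+μ` is not a root, so `X_{α+σ}`
centralizes `Xμ` and `Xσ`, and `Xα` commutes with `X_{σ+μ}`. -/
theorem stmt10 {R : Type*} [CommRing R] {G : Type*} [Group G]
    (Xσ Xμ Xσμ X2σμ Xα Xασ : R → G)
    (haddσ : ∀ t u : R, Xσ (t + u) = Xσ t * Xσ u)
    (haddμ : ∀ t u : R, Xμ (t + u) = Xμ t * Xμ u)
    (haddσμ : ∀ t u : R, Xσμ (t + u) = Xσμ t * Xσμ u)
    (hadd2σμ : ∀ t u : R, X2σμ (t + u) = X2σμ t * X2σμ u)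
    (haddα : ∀ t u : R, Xα (t + u) = Xα t * Xα u)
    (haddασ : ∀ t u : R, Xασ (t + u) = Xασ t * Xασ u)
    (hchev : ∀ t u : R, ⁅Xσ t, Xμ u⁆ = Xσμ (-(t * u)) * X2σμ (t ^ 2 * u))
    (h1 : ∀ t u : R, ⁅Xα t, X2σμ u⁆ = 1)
    (h2 : ∀ t u : R, ⁅Xα t, Xμ u⁆ = 1)
    (h3 : ∀ t u : R, ⁅Xα t, Xσ u⁆ = Xασ (-(2 * t * u)))
    (h4 : ∀ t u : R, ⁅Xασ t, Xμ u⁆ = 1)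
    (h5 : ∀ t u : R, ⁅Xασ t, Xσ u⁆ = 1)
    (hcomm : ∀ Z ∈ ([Xσμ, X2σμ] : List (R → G)),
      ∀ Y ∈ ([Xσ, Xμ, Xσμ, X2σμ] : List (R → G)),
      ∀ t u : R, ⁅Z t, Y u⁆ = 1) :
    ∀ t u : R, ⁅Xα t, Xσμ u⁆ = 1 := by
  intro t u
  rw [commutatorElement_eq_one_iff_commute]
  have cμ : ∀ v : R, Commute (Xα t) (Xμ v) := fun v =>
    commutatorElement_eq_one_iff_commute.mp (h2 t v)
  have c2 : ∀ v : R, Commute (Xα t) (X2σμ v) := fun v =>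
    commutatorElement_eq_one_iff_commute.mp (h1 t v)
  have cασμ : ∀ s v : R, Commute (Xασ s) (Xμ v) := fun s v =>
    commutatorElement_eq_one_iff_commute.mp (h4 s v)
  have cασσ : ∀ s v : R, Commute (Xασ s) (Xσ v) := fun s v =>
    commutatorElement_eq_one_iff_commute.mp (h5 s v)
  -- conjugation of Xσ 1 by Xα t
  have hconjσ : Xα t * Xσ 1 * (Xα t)⁻¹ = Xασ (-(2 * t * 1)) * Xσ 1 := by
    rw [← h3 t 1, commutatorElement_def]; group
  have hconjμ : ∀ v : R, Xα t * Xμ v * (Xα t)⁻¹ = Xμ v := fun v => by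
    rw [(cμ v).eq]; group
  -- Xα t commutes with the commutator ⁅Xσ 1, Xμ v⁆
  have cC : ∀ v : R, Commute (Xα t) ⁅Xσ 1, Xμ v⁆ := by
    intro v
    have h := conjugate_commutatorElement (Xσ 1) (Xμ v) (Xα t)
    rw [hconjσ, hconjμ] at h
    have cA : Commute (Xασ (-(2 * t * 1))) ⁅Xσ 1, Xμ v⁆ := by
      rw [commutatorElement_def,
        show Xσ 1 * Xμ v * (Xσ 1)⁻¹ * (Xμ v)⁻¹ = Xσ 1 * (Xμ v * ((Xσ 1)⁻¹ * (Xμ v)⁻¹)) by group]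
      exact ((cασσ _ 1).mul_right ((cασμ _ v).mul_right
        (((cασσ _ 1).inv_right).mul_right ((cασμ _ v).inv_right))))
    have h2' : ⁅Xασ (-(2 * t * 1)) * Xσ 1, Xμ v⁆ = ⁅Xσ 1, Xμ v⁆ := by
      rw [commutatorElement_def, commutatorElement_def]
      have e1 : Xασ (-(2 * t * 1)) * Xσ 1 * Xμ v = Xσ 1 * Xμ v * Xασ (-(2 * t * 1)) := by
        calc Xασ (-(2 * t * 1)) * Xσ 1 * Xμ v = Xσ 1 * Xασ (-(2 * t * 1)) * Xμ v := by
              rw [(cασσ _ 1).eq]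
          _ = Xσ 1 * Xμ v * Xασ (-(2 * t * 1)) := by
              rw [mul_assoc, (cασμ _ v).eq, ← mul_assoc]
      rw [mul_inv_rev, e1]
      calc Xσ 1 * Xμ v * Xασ (-(2 * t * 1)) * ((Xσ 1)⁻¹ * (Xασ (-(2 * t * 1)))⁻¹) * (Xμ v)⁻¹
          = Xσ 1 * Xμ v * (Xασ (-(2 * t * 1)) * (Xσ 1)⁻¹ * (Xασ (-(2 * t * 1)))⁻¹) * (Xμ v)⁻¹ := by
            group
        _ = Xσ 1 * Xμ v * (Xσ 1)⁻¹ * (Xμ v)⁻¹ := by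
            rw [(cασσ _ 1).inv_right.eq]; group
    rw [h2'] at h
    exact mul_inv_eq_iff_eq_mul.mp h
  -- express Xσμ from the Chevalley relation
  have key : ∀ v : R, Xσμ (-v) = ⁅Xσ 1, Xμ v⁆ * (X2σμ v)⁻¹ := by
    intro v
    rw [hchev]
    simp [one_mul, one_pow]
  have : Commute (Xα t) (Xσμ (-(-u))) := by
    rw [key]
    exact (cC (-u)).mul_right (c2 (-u)).inv_right
  simpa using this
end

section
/- Let Φ̄ be a finite root system of type Bₙ, Cₙ, BCₙ (n ≥ 2) or F₄ and let β̄ be a long root of Φ̄. Then there exist roots λ̄ (long) and σ̄ (short for B/C/F₄, middling for BCₙ) with β̄ = λ̄ + 2σ̄, and moreover β̄ + λ̄ + σ̄ ∉ Φ̄, β̄ + σ̄ ∉ Φ̄, β̄ + λ̄ ∉ Φ̄. -/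
/-- the "half" roots `(±e₁ ± e₂ ± e₃ ± e₄)/2` of `F₄` (when `n = 4`) -/
def isHalfF4 {n : ℕ} (v : Fin n → ℝ) : Prop := ∀ i, v i = 1 / 2 ∨ v i = -(1 / 2)

/-- the root system `Bₙ`: short `±eᵢ`, long `±eᵢ ± eⱼ` -/
def rootsB (n : ℕ) : Set (Fin n → ℝ) := {v | isShortBC v ∨ isMidBC v}

/-- the root system `Cₙ`: short `±eᵢ ± eⱼ`, long `±2eᵢ` -/
def rootsC (n : ℕ) : Set (Fin n → ℝ) := {v | isMidBC v ∨ isLongBC v}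

/-- the non-reduced root system `BCₙ` -/
def rootsBC (n : ℕ) : Set (Fin n → ℝ) := {v | isShortBC v ∨ isMidBC v ∨ isLongBC v}

/-- the root system `F₄` (for `n = 4`): `±eᵢ`, `±eᵢ ± eⱼ`, `(±e₁ ± e₂ ± e₃ ± e₄)/2` -/
def rootsF4 (n : ℕ) : Set (Fin n → ℝ) := {v | isShortBC v ∨ isMidBC v ∨ isHalfF4 v}

/-- dot product on `ℝⁿ` -/
def dotR {n : ℕ} (a b : Fin n → ℝ) : ℝ := ∑ i, a i * b i

lemma eR_self (n : ℕ) (i : Fin n) : eR n i i = 1 := by simp [eR]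
lemma eR_ne {n : ℕ} {i k : Fin n} (h : k ≠ i) : eR n i k = 0 := Pi.single_eq_of_ne h 1
lemma dotR_add_left {n : ℕ} (a b c : Fin n → ℝ) : dotR (a + b) c = dotR a c + dotR b c := by
  simp [dotR, add_mul, Finset.sum_add_distrib]
lemma dotR_add_right {n : ℕ} (a b c : Fin n → ℝ) : dotR a (b + c) = dotR a b + dotR a c := by
  simp [dotR, mul_add, Finset.sum_add_distrib]
lemma dotR_smul_left {n : ℕ} (r : ℝ) (a b : Fin n → ℝ) : dotR (r • a) b = r * dotR a b := by
  simp [dotR, Finset.mul_sum, mul_assoc]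
lemma dotR_smul_right {n : ℕ} (r : ℝ) (a b : Fin n → ℝ) : dotR a (r • b) = r * dotR a b := by
  unfold dotR
  rw [Finset.mul_sum]
  refine Finset.sum_congr rfl fun i _ => ?_
  simp only [Pi.smul_apply, smul_eq_mul]; ring
lemma dotR_e {n : ℕ} (i j : Fin n) : dotR (eR n i) (eR n j) = if i = j then 1 else 0 := by
  simp only [dotR, eR, Pi.single_apply, mul_ite, ite_mul, one_mul, zero_mul, mul_one, mul_zero,
    Finset.sum_ite_eq', Finset.mem_univ, if_true]
  exact if_congr eq_comm rfl rfl
lemma dotR_neg_left {n : ℕ} (a b : Fin n → ℝ) : dotR (-a) b = -dotR a b := by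
  rw [show -a = (-1 : ℝ) • a by simp, dotR_smul_left]; ring
lemma dotR_neg_right {n : ℕ} (a b : Fin n → ℝ) : dotR a (-b) = -dotR a b := by
  rw [show -b = (-1 : ℝ) • b by simp, dotR_smul_right]; ring
lemma dotR_single {n : ℕ} (i : Fin n) (a b : ℝ) : dotR (a • eR n i) (b • eR n i) = a * b := by
  rw [dotR_smul_left, dotR_smul_right, dotR_e]; simp
lemma dotR_pair {n : ℕ} {i j : Fin n} (hij : i ≠ j) (a b c d : ℝ) :
    dotR (a • eR n i + b • eR n j) (c • eR n i + d • eR n j) = a * c + b * d := by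
  simp [dotR_add_left, dotR_add_right, dotR_smul_left, dotR_smul_right, dotR_e, hij, hij.symm]
  ring
lemma dot_short {n : ℕ} {v : Fin n → ℝ} (h : isShortBC v) : dotR v v = 1 := by
  obtain ⟨i, rfl | rfl⟩ := h
  · simp [dotR_e]
  · rw [dotR_neg_left, dotR_neg_right, dotR_e]; simp

lemma dot_mid {n : ℕ} {v : Fin n → ℝ} (h : isMidBC v) : dotR v v = 2 := by
  obtain ⟨i, j, hij, ε, δ, hε, hδ, rfl⟩ := h
  rw [dotR_pair hij]
  rcases hε with rfl | rfl <;> rcases hδ with rfl | rfl <;> norm_num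

lemma dot_long {n : ℕ} {v : Fin n → ℝ} (h : isLongBC v) : dotR v v = 4 := by
  obtain ⟨i, rfl | rfl⟩ := h
  · rw [dotR_single]; norm_num
  · rw [dotR_neg_left, dotR_neg_right, dotR_single]; norm_num

lemma dot_half {n : ℕ} (hn : n = 4) {v : Fin n → ℝ} (h : isHalfF4 v) : dotR v v = 1 := by
  have hk : ∀ k, v k * v k = 1 / 4 := fun k => by rcases h k with h' | h' <;> rw [h'] <;> norm_num
  subst hn
  rw [dotR, Finset.sum_congr rfl fun k _ => hk k]
  simp

lemma short_apply {n : ℕ} {v : Fin n → ℝ} (h : isShortBC v) (k : Fin n) :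
    v k = 0 ∨ v k = 1 ∨ v k = -1 := by
  obtain ⟨i, rfl | rfl⟩ := h <;> by_cases hk : k = i <;>
    simp [hk, eR_self, eR_ne, Pi.neg_apply]

lemma mid_apply {n : ℕ} {v : Fin n → ℝ} (h : isMidBC v) (k : Fin n) :
    v k = 0 ∨ v k = 1 ∨ v k = -1 := by
  obtain ⟨i, j, hij, ε, δ, hε, hδ, rfl⟩ := h
  by_cases h1 : k = i <;> by_cases h2 : k = j
  · exact absurd (h1.symm.trans h2) hij
  · subst h1; simp [eR_self, eR_ne h2]; tauto
  · subst h2; simp [eR_self, eR_ne h1]; tauto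
  · simp [eR_ne h1, eR_ne h2]

lemma long_apply {n : ℕ} {v : Fin n → ℝ} (h : isLongBC v) (k : Fin n) :
    v k = 0 ∨ v k = 2 ∨ v k = -2 := by
  obtain ⟨i, rfl | rfl⟩ := h <;> by_cases hk : k = i <;>
    simp [hk, eR_self, eR_ne, Pi.neg_apply]

lemma long_single {n : ℕ} {v : Fin n → ℝ} (h : isLongBC v) {a b : Fin n}
    (ha : v a ≠ 0) (hb : v b ≠ 0) : a = b := by
  obtain ⟨i, rfl | rfl⟩ := h <;>
  · have h1 : a = i := by by_contra hc; exact ha (by simp [eR_ne hc])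
    have h2 : b = i := by by_contra hc; exact hb (by simp [eR_ne hc])
    rw [h1, h2]

lemma not_root_val {n : ℕ} {v : Fin n → ℝ} (k : Fin n)
    (hv : v k = 2 ∨ v k = -2 ∨ v k = 3 ∨ v k = -3) :
    ¬isShortBC v ∧ ¬isMidBC v ∧ ¬isHalfF4 v := by
  refine ⟨fun h => ?_, fun h => ?_, fun h => ?_⟩
  · rcases short_apply h k with h' | h' | h' <;> rcases hv with h'' | h'' | h'' | h'' <;>
      rw [h'] at h'' <;> norm_num at h''
  · rcases mid_apply h k with h' | h' | h' <;> rcases hv with h'' | h'' | h'' | h'' <;>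
      rw [h'] at h'' <;> norm_num at h''
  · rcases h k with h' | h' <;> rcases hv with h'' | h'' | h'' | h'' <;>
      rw [h'] at h'' <;> norm_num at h''

lemma not_long_val {n : ℕ} {v : Fin n → ℝ} (k : Fin n)
    (hv : v k = 3 ∨ v k = -3 ∨ v k = 1 ∨ v k = -1) : ¬isLongBC v := fun h => by
  rcases long_apply h k with h' | h' | h' <;> rcases hv with h'' | h'' | h'' | h'' <;>
    rw [h'] at h'' <;> norm_num at h''
lemma auxMid {n : ℕ} {i j : Fin n} (hij : i ≠ j) {ε δ : ℝ}
    (hε : ε = 1 ∨ ε = -1) (hδ : δ = 1 ∨ δ = -1) :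
    ∃ lam σ : Fin n → ℝ, isMidBC lam ∧ isShortBC σ ∧
      dotR lam lam = dotR (ε • eR n i + δ • eR n j) (ε • eR n i + δ • eR n j) ∧
      2 * dotR σ σ = dotR (ε • eR n i + δ • eR n j) (ε • eR n i + δ • eR n j) ∧
      ε • eR n i + δ • eR n j = lam + (2 : ℝ) • σ ∧
      (¬isShortBC (ε • eR n i + δ • eR n j + lam + σ) ∧
        ¬isMidBC (ε • eR n i + δ • eR n j + lam + σ) ∧
        ¬isHalfF4 (ε • eR n i + δ • eR n j + lam + σ)) ∧
      (¬isShortBC (ε • eR n i + δ • eR n j + σ) ∧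
        ¬isMidBC (ε • eR n i + δ • eR n j + σ) ∧
        ¬isHalfF4 (ε • eR n i + δ • eR n j + σ)) ∧
      (¬isShortBC (ε • eR n i + δ • eR n j + lam) ∧
        ¬isMidBC (ε • eR n i + δ • eR n j + lam) ∧
        ¬isHalfF4 (ε • eR n i + δ • eR n j + lam)) := by
  have v1i : (ε • eR n i + δ • eR n j + (ε • eR n i + (-δ) • eR n j) + δ • eR n j) i = 2 * ε := by
    simp [eR_self, eR_ne hij]; ring
  have v2j : (ε • eR n i + δ • eR n j + δ • eR n j) j = 2 * δ := by
    simp [eR_self, eR_ne hij.symm]; ring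
  have v3i : (ε • eR n i + δ • eR n j + (ε • eR n i + (-δ) • eR n j)) i = 2 * ε := by
    simp [eR_self, eR_ne hij]; ring
  refine ⟨ε • eR n i + (-δ) • eR n j, δ • eR n j,
    ⟨i, j, hij, ε, -δ, hε, by rcases hδ with rfl | rfl <;> norm_num, rfl⟩, ?_, ?_, ?_, ?_, ?_, ?_, ?_⟩
  · rcases hδ with rfl | rfl
    · exact ⟨j, Or.inl (one_smul ℝ _)⟩
    · exact ⟨j, Or.inr (neg_one_smul ℝ _)⟩
  · rw [dotR_pair hij, dotR_pair hij]; ring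
  · rw [dotR_single, dotR_pair hij]
    rcases hε with rfl | rfl <;> rcases hδ with rfl | rfl <;> norm_num
  · module
  · exact not_root_val i (by rw [v1i]; rcases hε with rfl | rfl <;> norm_num)
  · exact not_root_val j (by rw [v2j]; rcases hδ with rfl | rfl <;> norm_num)
  · exact not_root_val i (by rw [v3i]; rcases hε with rfl | rfl <;> norm_num)

lemma auxLong {n : ℕ} (hn : 2 ≤ n) (i : Fin n) {d : ℝ} (hd : d = 1 ∨ d = -1) :
    ∃ lam σ : Fin n → ℝ, isLongBC lam ∧ isMidBC σ ∧
      dotR lam lam = dotR ((2 * d) • eR n i) ((2 * d) • eR n i) ∧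
      2 * dotR σ σ = dotR ((2 * d) • eR n i) ((2 * d) • eR n i) ∧
      (2 * d) • eR n i = lam + (2 : ℝ) • σ ∧
      (¬isShortBC ((2 * d) • eR n i + lam + σ) ∧ ¬isMidBC ((2 * d) • eR n i + lam + σ) ∧
        ¬isLongBC ((2 * d) • eR n i + lam + σ) ∧ ¬isHalfF4 ((2 * d) • eR n i + lam + σ)) ∧
      (¬isShortBC ((2 * d) • eR n i + σ) ∧ ¬isMidBC ((2 * d) • eR n i + σ) ∧
        ¬isLongBC ((2 * d) • eR n i + σ) ∧ ¬isHalfF4 ((2 * d) • eR n i + σ)) ∧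
      (¬isShortBC ((2 * d) • eR n i + lam) ∧ ¬isMidBC ((2 * d) • eR n i + lam) ∧
        ¬isLongBC ((2 * d) • eR n i + lam) ∧ ¬isHalfF4 ((2 * d) • eR n i + lam)) := by
  have : Nontrivial (Fin n) := ⟨⟨0, by omega⟩, ⟨1, by omega⟩, by simp [Fin.ext_iff]⟩
  obtain ⟨j, hj⟩ := exists_ne i
  have v1i : ((2 * d) • eR n i + (2 : ℝ) • eR n j + (d • eR n i + (-1 : ℝ) • eR n j)) i
      = 3 * d := by simp [eR_self, eR_ne hj.symm]; ring
  have v2i : ((2 * d) • eR n i + (d • eR n i + (-1 : ℝ) • eR n j)) i = 3 * d := by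
    simp [eR_self, eR_ne hj.symm]; ring
  have v3i : ((2 * d) • eR n i + (2 : ℝ) • eR n j) i = 2 * d := by
    simp [eR_self, eR_ne hj.symm]
  have v3j : ((2 * d) • eR n i + (2 : ℝ) • eR n j) j = 2 := by
    simp [eR_self, eR_ne hj]
  refine ⟨(2 : ℝ) • eR n j, d • eR n i + (-1 : ℝ) • eR n j, ⟨j, Or.inl rfl⟩,
    ⟨i, j, hj.symm, d, -1, hd, Or.inr rfl, rfl⟩, ?_, ?_, ?_, ?_, ?_, ?_⟩
  · rw [dotR_single, dotR_single]; rcases hd with rfl | rfl <;> norm_num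
  · rw [dotR_single, dotR_pair hj.symm]; rcases hd with rfl | rfl <;> norm_num
  · module
  · obtain ⟨a, b, c⟩ := not_root_val
      (v := (2 * d) • eR n i + (2 : ℝ) • eR n j + (d • eR n i + (-1 : ℝ) • eR n j)) i
      (by rw [v1i]; rcases hd with rfl | rfl <;> norm_num)
    exact ⟨a, b, not_long_val i (by rw [v1i]; rcases hd with rfl | rfl <;> norm_num), c⟩
  · obtain ⟨a, b, c⟩ := not_root_val
      (v := (2 * d) • eR n i + (d • eR n i + (-1 : ℝ) • eR n j)) i
      (by rw [v2i]; rcases hd with rfl | rfl <;> norm_num)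
    exact ⟨a, b, not_long_val i (by rw [v2i]; rcases hd with rfl | rfl <;> norm_num), c⟩
  · obtain ⟨a, b, c⟩ := not_root_val
      (v := (2 * d) • eR n i + (2 : ℝ) • eR n j) i
      (by rw [v3i]; rcases hd with rfl | rfl <;> norm_num)
    refine ⟨a, b, fun h => hj (long_single h (a := j) (b := i) ?_ ?_), c⟩
    · rw [v3j]; norm_num
    · rw [v3i]; rcases hd with rfl | rfl <;> norm_num

/-- in a root system of type `Bₙ`, `Cₙ`, `BCₙ` (n ≥ 2) or `F₄`, every
long root `β` (a root of maximal length) can be written as `β = λ + 2σ` with `λ`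
long and `σ` of half the squared length of `β` (short for `B`/`C`/`F₄`, middling for
`BCₙ`), and moreover `β + λ + σ`, `β + σ`, `β + λ` are not roots. -/
theorem stmt16 {n : ℕ} (hn : 2 ≤ n) (Φb : Set (Fin n → ℝ))
    (htype : Φb = rootsB n ∨ Φb = rootsC n ∨ Φb = rootsBC n ∨ (n = 4 ∧ Φb = rootsF4 n))
    (β : Fin n → ℝ) (hβ : β ∈ Φb) (hlong : ∀ a ∈ Φb, dotR a a ≤ dotR β β) :
    ∃ lam ∈ Φb, ∃ σ ∈ Φb,
      dotR lam lam = dotR β β ∧ 2 * dotR σ σ = dotR β β ∧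
      β = lam + (2 : ℝ) • σ ∧
      β + lam + σ ∉ Φb ∧ β + σ ∉ Φb ∧ β + lam ∉ Φb := by
  obtain ⟨i0, i1, hne⟩ : ∃ i0 i1 : Fin n, i0 ≠ i1 :=
    ⟨⟨0, by omega⟩, ⟨1, by omega⟩, by simp [Fin.ext_iff]⟩
  have hmid0 : isMidBC ((1 : ℝ) • eR n i0 + (1 : ℝ) • eR n i1) :=
    ⟨i0, i1, hne, 1, 1, Or.inl rfl, Or.inl rfl, rfl⟩
  have hlong0 : isLongBC ((2 : ℝ) • eR n i0) := ⟨i0, Or.inl rfl⟩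
  rcases htype with rfl | rfl | rfl | ⟨hn4, rfl⟩
  · -- Bₙ
    rcases hβ with hs | hm
    · exfalso
      have h1 := hlong _ (Or.inr hmid0)
      rw [dot_short hs, dot_mid hmid0] at h1; linarith
    · obtain ⟨i, j, hij, ε, δ, hε, hδ, rfl⟩ := hm
      obtain ⟨lam, σ, hlamM, hσS, hd1, hd2, heq, hN1, hN2, hN3⟩ := auxMid hij hε hδ
      refine ⟨lam, Or.inr hlamM, σ, Or.inl hσS, hd1, hd2, heq, ?_, ?_, ?_⟩
      · rintro (h | h); exacts [hN1.1 h, hN1.2.1 h]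
      · rintro (h | h); exacts [hN2.1 h, hN2.2.1 h]
      · rintro (h | h); exacts [hN3.1 h, hN3.2.1 h]
  · -- Cₙ
    rcases hβ with hm | hl
    · exfalso
      have h1 := hlong _ (Or.inr hlong0)
      rw [dot_mid hm, dot_long hlong0] at h1; linarith
    · obtain ⟨i, hcase⟩ := hl
      obtain ⟨d, hd, hβ'⟩ : ∃ d : ℝ, (d = 1 ∨ d = -1) ∧ β = (2 * d) • eR n i := by
        rcases hcase with rfl | rfl
        · exact ⟨1, Or.inl rfl, by norm_num⟩
        · exact ⟨-1, Or.inr rfl, by rw [show (2 : ℝ) * -1 = -2 by norm_num, ← neg_smul]⟩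
      subst hβ'
      obtain ⟨lam, σ, hlamL, hσM, hd1, hd2, heq, hN1, hN2, hN3⟩ := auxLong hn i hd
      refine ⟨lam, Or.inr hlamL, σ, Or.inl hσM, hd1, hd2, heq, ?_, ?_, ?_⟩
      · rintro (h | h); exacts [hN1.2.1 h, hN1.2.2.1 h]
      · rintro (h | h); exacts [hN2.2.1 h, hN2.2.2.1 h]
      · rintro (h | h); exacts [hN3.2.1 h, hN3.2.2.1 h]
  · -- BCₙ
    rcases hβ with hs | hm | hl
    · exfalso
      have h1 := hlong _ (Or.inr (Or.inr hlong0))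
      rw [dot_short hs, dot_long hlong0] at h1; linarith
    · exfalso
      have h1 := hlong _ (Or.inr (Or.inr hlong0))
      rw [dot_mid hm, dot_long hlong0] at h1; linarith
    · obtain ⟨i, hcase⟩ := hl
      obtain ⟨d, hd, hβ'⟩ : ∃ d : ℝ, (d = 1 ∨ d = -1) ∧ β = (2 * d) • eR n i := by
        rcases hcase with rfl | rfl
        · exact ⟨1, Or.inl rfl, by norm_num⟩
        · exact ⟨-1, Or.inr rfl, by rw [show (2 : ℝ) * -1 = -2 by norm_num, ← neg_smul]⟩
      subst hβ'
      obtain ⟨lam, σ, hlamL, hσM, hd1, hd2, heq, hN1, hN2, hN3⟩ := auxLong hn i hd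
      refine ⟨lam, Or.inr (Or.inr hlamL), σ, Or.inr (Or.inl hσM), hd1, hd2, heq, ?_, ?_, ?_⟩
      · rintro (h | h | h); exacts [hN1.1 h, hN1.2.1 h, hN1.2.2.1 h]
      · rintro (h | h | h); exacts [hN2.1 h, hN2.2.1 h, hN2.2.2.1 h]
      · rintro (h | h | h); exacts [hN3.1 h, hN3.2.1 h, hN3.2.2.1 h]
  · -- F₄
    rcases hβ with hs | hm | hh
    · exfalso
      have h1 := hlong _ (Or.inr (Or.inl hmid0))
      rw [dot_short hs, dot_mid hmid0] at h1; linarith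
    · obtain ⟨i, j, hij, ε, δ, hε, hδ, rfl⟩ := hm
      obtain ⟨lam, σ, hlamM, hσS, hd1, hd2, heq, hN1, hN2, hN3⟩ := auxMid hij hε hδ
      refine ⟨lam, Or.inr (Or.inl hlamM), σ, Or.inl hσS, hd1, hd2, heq, ?_, ?_, ?_⟩
      · rintro (h | h | h); exacts [hN1.1 h, hN1.2.1 h, hN1.2.2 h]
      · rintro (h | h | h); exacts [hN2.1 h, hN2.2.1 h, hN2.2.2 h]
      · rintro (h | h | h); exacts [hN3.1 h, hN3.2.1 h, hN3.2.2 h]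
    · exfalso
      have h1 := hlong _ (Or.inr (Or.inl hmid0))
      rw [dot_half hn4 hh, dot_mid hmid0] at h1; linarith
end

section
/- Let Φ = G̃₂ (untwisted affine G₂ root system) and let α, β ∈ Φ be distinct roots with the same projection ᾱ = β̄ to a short root of G₂. In the Steinberg-style group generated by the root groups with the G₂ Chevalley relations (relations (17)–(26) of the paper for all classically prenilpotent pairs among the roots α, σ, λ, σ+λ, 2σ+λ, 3σ+λ, 3σ+2λ, α+σ, α+2σ, 2α+σ, α+2σ+λ, where β = σ+λ), the commutator [X_α(t), X_β(u)] equals X_{α+2σ+λ}(C t u) for some constant C ∈ {0, ±6, 12} depending only on two sign choices ε, ε' ∈ {±1} via C = 3 + 3ε' − 6εε'. -/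
/-- A vector `(a, s, l) ∈ ℤ³` stands for `aα + sσ + lλ` in the affine `G̃₂` root
lattice, where `α, σ, λ` project to the `G₂`-roots `σ̄+λ̄`, `σ̄`, `λ̄`.  This is the
projection to `G₂`-coordinates `(coefficient of σ̄, coefficient of λ̄)`. -/
def g2proj (v : ℤ × ℤ × ℤ) : ℤ × ℤ := (v.1 + v.2.1, v.1 + v.2.2)

/-- the roots of `G₂` in simple-root coordinates `(σ̄-coeff, λ̄-coeff)` -/
def g2roots : Set (ℤ × ℤ) :=
  {(1, 0), (0, 1), (1, 1), (2, 1), (3, 1), (3, 2),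
   (-1, 0), (0, -1), (-1, -1), (-2, -1), (-3, -1), (-3, -2)}

/-- the eleven roots `α, σ, λ, σ+λ, 2σ+λ, 3σ+λ, 3σ+2λ, α+σ, α+2σ, 2α+σ, α+2σ+λ`
appearing in Case 4 of the paper -/
def caseRoots : Set (ℤ × ℤ × ℤ) :=
  {(1, 0, 0), (0, 1, 0), (0, 0, 1), (0, 1, 1), (0, 2, 1), (0, 3, 1), (0, 3, 2),
   (1, 1, 0), (1, 2, 0), (2, 1, 0), (1, 2, 1)}

open scoped commutatorElement


section CommutatorHelpers
variable {G : Type*} [Group G]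

private lemma conj_commEl (g a b : G) : g * ⁅a, b⁆ * g⁻¹ = ⁅g * a * g⁻¹, g * b * g⁻¹⁆ := by
  simp only [commutatorElement_def]; group

private lemma commEl_mul (a b c : G) : ⁅a * b, c⁆ = a * ⁅b, c⁆ * a⁻¹ * ⁅a, c⁆ := by
  simp only [commutatorElement_def]; group

private lemma conj_of_comm {g a : G} (h : g * a = a * g) : g * a * g⁻¹ = a := by
  rw [h, mul_inv_cancel_right]

private lemma conj_eq_commEl_mul (g a : G) : g * a * g⁻¹ = ⁅g, a⁆ * a := by
  simp only [commutatorElement_def]; group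

private lemma conj_mul_dist (g a b : G) : g * (a * b) * g⁻¹ = (g * a * g⁻¹) * (g * b * g⁻¹) := by
  group

end CommutatorHelpers

/-- The block `Γ(v) = X_{2σ+λ}(v) X_{σ+λ}(−v) X_{3σ+λ}(v) X_{3σ+2λ}(−v²) = ⁅X_σ(1), X_λ(v)⁆`. -/
def Gam {R : Type*} [CommRing R] {G : Type*} [Group G] (X : ℤ × ℤ × ℤ → R → G) (v : R) : G :=
  X (0, 2, 1) v * (X (0, 1, 1) (-v) * (X (0, 3, 1) v * X (0, 3, 2) (-(v ^ 2))))

set_option maxHeartbeats 4000000 in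
/-- in a group with additive one-parameter root subgroups satisfying
the `G₂` Chevalley relations (with sign choices `ε, ε' = ±1`), commutativity of the
root-group pairs whose projections are linearly independent and whose root sum is
not a root, and centrality of the long-root groups `X_{3σ+2λ}, X_{α+2σ+λ},
X_{2α+σ}`, one has `[X_α(t), X_β(u)] = X_{α+2σ+λ}(C t u)` with
`C = 3 + 3ε' − 6εε' ∈ {0, ±6, 12}`, where `β = σ + λ`. -/
theorem stmt17 {R : Type*} [CommRing R] {G : Type*} [Group G]
    (X : ℤ × ℤ × ℤ → R → G)
    (hadd : ∀ v ∈ caseRoots, ∀ t u : R, X v (t + u) = X v t * X v u)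
    (ε ε' : R) (hε : ε = 1 ∨ ε = -1) (hε' : ε' = 1 ∨ ε' = -1)
    (h1 : ∀ t u : R, ⁅X (0, 1, 0) t, X (0, 0, 1) u⁆ =
      X (0, 2, 1) (t ^ 2 * u) * X (0, 1, 1) (-(t * u)) *
        X (0, 3, 1) (t ^ 3 * u) * X (0, 3, 2) (-(t ^ 3 * u ^ 2)))
    (h2 : ∀ t u : R, ⁅X (1, 0, 0) t, X (0, 2, 1) u⁆ = X (1, 2, 1) (3 * t * u))
    (h3 : ∀ t u : R, ⁅X (0, 1, 0) t, X (1, 0, 0) u⁆ =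
      X (1, 1, 0) (-(2 * t * u)) * X (1, 2, 0) (-(3 * t ^ 2 * u)) *
        X (2, 1, 0) (-(3 * t * u ^ 2)))
    (h4 : ∀ t u : R, ⁅X (0, 1, 0) t, X (1, 1, 0) u⁆ = X (1, 2, 0) (3 * ε * t * u))
    (h5 : ∀ t u : R, ⁅X (0, 0, 1) t, X (1, 2, 0) u⁆ = X (1, 2, 1) (ε' * t * u))
    (hcomm : ∀ v ∈ caseRoots, ∀ w ∈ caseRoots,
      (g2proj v).1 * (g2proj w).2 ≠ (g2proj v).2 * (g2proj w).1 →
      g2proj v + g2proj w ∉ g2roots →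
      ∀ t u : R, ⁅X v t, X w u⁆ = 1)
    (hcent : ∀ v ∈ ({(0, 3, 2), (1, 2, 1), (2, 1, 0)} : Set (ℤ × ℤ × ℤ)),
      ∀ w ∈ caseRoots, ∀ t u : R, ⁅X v t, X w u⁆ = 1) :
    ∀ t u : R, ⁅X (1, 0, 0) t, X (0, 1, 1) u⁆ =
      X (1, 2, 1) ((3 + 3 * ε' - 6 * ε * ε') * t * u) := by
  -- membership facts
  have mA : ((1,0,0) : ℤ×ℤ×ℤ) ∈ caseRoots := by simp [caseRoots]
  have mS : ((0,1,0) : ℤ×ℤ×ℤ) ∈ caseRoots := by simp [caseRoots]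
  have mL : ((0,0,1) : ℤ×ℤ×ℤ) ∈ caseRoots := by simp [caseRoots]
  have mB : ((0,1,1) : ℤ×ℤ×ℤ) ∈ caseRoots := by simp [caseRoots]
  have mC2 : ((0,2,1) : ℤ×ℤ×ℤ) ∈ caseRoots := by simp [caseRoots]
  have mC3 : ((0,3,1) : ℤ×ℤ×ℤ) ∈ caseRoots := by simp [caseRoots]
  have mZ : ((0,3,2) : ℤ×ℤ×ℤ) ∈ caseRoots := by simp [caseRoots]
  have mP1 : ((1,1,0) : ℤ×ℤ×ℤ) ∈ caseRoots := by simp [caseRoots]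
  have mP2 : ((1,2,0) : ℤ×ℤ×ℤ) ∈ caseRoots := by simp [caseRoots]
  have mQ : ((2,1,0) : ℤ×ℤ×ℤ) ∈ caseRoots := by simp [caseRoots]
  have mW : ((1,2,1) : ℤ×ℤ×ℤ) ∈ caseRoots := by simp [caseRoots]
  -- basic one-parameter-subgroup facts
  have hX0 : ∀ v ∈ caseRoots, X v 0 = 1 := by
    intro v hv
    have h := hadd v hv 0 0
    rw [add_zero] at h
    exact left_eq_mul.mp h
  have hXneg : ∀ v ∈ caseRoots, ∀ a : R, X v (-a) = (X v a)⁻¹ := by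
    intro v hv a
    refine eq_inv_of_mul_eq_one_left ?_
    rw [← hadd v hv, neg_add_cancel, hX0 v hv]
  -- centrality as Commute facts
  have centW : ∀ w ∈ caseRoots, ∀ a b : R, Commute (X (1,2,1) a) (X w b) := by
    intro w hw a b
    exact commutatorElement_eq_one_iff_mul_comm.mp (hcent _ (by simp) w hw a b)
  have centZ : ∀ w ∈ caseRoots, ∀ a b : R, Commute (X (0,3,2) a) (X w b) := by
    intro w hw a b
    exact commutatorElement_eq_one_iff_mul_comm.mp (hcent _ (by simp) w hw a b)
  have centQ : ∀ w ∈ caseRoots, ∀ a b : R, Commute (X (2,1,0) a) (X w b) := by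
    intro w hw a b
    exact commutatorElement_eq_one_iff_mul_comm.mp (hcent _ (by simp) w hw a b)
  -- commuting pairs from hcomm
  have cAL : ∀ t u : R, Commute (X (1,0,0) t) (X (0,0,1) u) := fun t u =>
    commutatorElement_eq_one_iff_mul_comm.mp
      (hcomm _ mA _ mL (by decide) (by simp [g2proj, g2roots, Prod.ext_iff]) t u)
  have cAC3 : ∀ t u : R, Commute (X (1,0,0) t) (X (0,3,1) u) := fun t u =>
    commutatorElement_eq_one_iff_mul_comm.mp
      (hcomm _ mA _ mC3 (by decide) (by simp [g2proj, g2roots, Prod.ext_iff]) t u)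
  have cSP2 : ∀ t u : R, Commute (X (0,1,0) t) (X (1,2,0) u) := fun t u =>
    commutatorElement_eq_one_iff_mul_comm.mp
      (hcomm _ mS _ mP2 (by decide) (by simp [g2proj, g2roots, Prod.ext_iff]) t u)
  have cP1L : ∀ t u : R, Commute (X (1,1,0) t) (X (0,0,1) u) := fun t u =>
    commutatorElement_eq_one_iff_mul_comm.mp
      (hcomm _ mP1 _ mL (by decide) (by simp [g2proj, g2roots, Prod.ext_iff]) t u)
  -- reversed commutator for (L, P2)
  have hP2L : ∀ w v : R, ⁅X (1,2,0) w, X (0,0,1) v⁆ = X (1,2,1) (-(ε' * v * w)) := by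
    intro w v
    rw [hXneg _ mW, ← h5 v w]
    exact (commutatorElement_inv _ _).symm
  -- Γ(v) = ⁅X_σ(1), X_λ(v)⁆
  have hGam : ∀ v : R, ⁅X (0,1,0) (1:R), X (0,0,1) v⁆ = Gam X v := by
    intro v
    rw [h1]
    simp only [Gam, one_pow, one_mul, mul_assoc]
  -- Commute of central blocks with Γ
  have wGam : ∀ a v : R, Commute (X (1,2,1) a) (Gam X v) := by
    intro a v
    unfold Gam
    exact (centW _ mC2 a v).mul_right ((centW _ mB a (-v)).mul_right
      ((centW _ mC3 a v).mul_right (centW _ mZ a (-(v^2)))))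
  have qGam : ∀ a v : R, Commute (X (2,1,0) a) (Gam X v) := by
    intro a v
    unfold Gam
    exact (centQ _ mC2 a v).mul_right ((centQ _ mB a (-v)).mul_right
      ((centQ _ mC3 a v).mul_right (centQ _ mZ a (-(v^2)))))
  -- Step A : Γ(v) commutes with X_{α+2σ}(w)
  have stepA : ∀ v w : R, Commute (X (1,2,0) w) (Gam X v) := by
    intro v w
    have e1 := conj_commEl (X (0,1,0) (1:R)) (X (0,0,1) v) (X (1,2,0) w)
    rw [h5, conj_of_comm ((centW _ mS (ε'*v*w) 1).symm.eq),
      conj_of_comm (cSP2 1 w).eq,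
      conj_eq_commEl_mul (X (0,1,0) (1:R)) (X (0,0,1) v), hGam,
      commEl_mul, h5, conj_of_comm ((wGam (ε'*v*w) v).symm.eq)] at e1
    have e2 : ⁅Gam X v, X (1,2,0) w⁆ = 1 := (left_eq_mul.mp e1).symm ▸ rfl
    exact (commutatorElement_eq_one_iff_mul_comm.mp e2).symm
  -- oriented rewrite rules (move W left, combine W's, move Γ left)
  have swW0 : ∀ w ∈ caseRoots, ∀ (a b : R), X w b * X (1,2,1) a = X (1,2,1) a * X w b :=
    fun w hw a b => ((centW w hw a b).symm).eq
  have swW : ∀ w ∈ caseRoots, ∀ (a b : R) (x : G),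
      X w b * (X (1,2,1) a * x) = X (1,2,1) a * (X w b * x) := by
    intro w hw a b x
    rw [← mul_assoc, swW0 w hw a b, mul_assoc]
  have swGamW0 : ∀ a v : R, Gam X v * X (1,2,1) a = X (1,2,1) a * Gam X v :=
    fun a v => ((wGam a v).symm).eq
  have swGamW : ∀ (a v : R) (x : G),
      Gam X v * (X (1,2,1) a * x) = X (1,2,1) a * (Gam X v * x) := by
    intro a v x
    rw [← mul_assoc, swGamW0, mul_assoc]
  have swP2Gam0 : ∀ v b : R, X (1,2,0) b * Gam X v = Gam X v * X (1,2,0) b :=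
    fun v b => (stepA v b).eq
  have swP2Gam : ∀ (v b : R) (x : G),
      X (1,2,0) b * (Gam X v * x) = Gam X v * (X (1,2,0) b * x) := by
    intro v b x
    rw [← mul_assoc, swP2Gam0, mul_assoc]
  have swQGam0 : ∀ v b : R, X (2,1,0) b * Gam X v = Gam X v * X (2,1,0) b :=
    fun v b => (qGam b v).eq
  have swQGam : ∀ (v b : R) (x : G),
      X (2,1,0) b * (Gam X v * x) = Gam X v * (X (2,1,0) b * x) := by
    intro v b x
    rw [← mul_assoc, swQGam0, mul_assoc]
  have addW0 : ∀ a b : R, X (1,2,1) a * X (1,2,1) b = X (1,2,1) (a+b) :=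
    fun a b => (hadd _ mW a b).symm
  have addW : ∀ (a b : R) (x : G), X (1,2,1) a * (X (1,2,1) b * x) = X (1,2,1) (a+b) * x := by
    intro a b x
    rw [← mul_assoc, addW0]
  -- Step B : conjugation of Γ by X_{α+σ}
  have starB : ∀ x u : R, X (1,1,0) x * Gam X u * (X (1,1,0) x)⁻¹
      = X (1,2,1) (3*ε*ε'*u*x) * Gam X u := by
    intro x u
    have e2 : ⁅X (1,1,0) x, X (0,1,0) (1:R)⁆ = X (1,2,0) (-(3*ε*1*x)) := by
      rw [hXneg _ mP2, ← h4 1 x]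
      exact (commutatorElement_inv _ _).symm
    have e1 := conj_commEl (X (1,1,0) x) (X (0,1,0) (1:R)) (X (0,0,1) u)
    rw [hGam, conj_of_comm (cP1L x u).eq,
      conj_eq_commEl_mul (X (1,1,0) x) (X (0,1,0) (1:R)), e2,
      commEl_mul, hGam, hP2L,
      conj_of_comm ((stepA u (-(3*ε*1*x))).eq)] at e1
    rw [e1, ← swGamW0]
    have harg : -(ε' * u * -(3*ε*1*x)) = 3*ε*ε'*u*x := by ring
    rw [harg]
  -- conjugation of X_σ(1) by X_α(t)
  have hAS1 : ∀ t : R, X (1,0,0) t * X (0,1,0) (1:R) * (X (1,0,0) t)⁻¹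
      = X (2,1,0) (3*1*t^2) * (X (1,2,0) (3*1^2*t) * (X (1,1,0) (2*1*t) * X (0,1,0) (1:R))) := by
    intro t
    rw [conj_eq_commEl_mul]
    have e2 : ⁅X (1,0,0) t, X (0,1,0) (1:R)⁆
        = X (2,1,0) (3*1*t^2) * (X (1,2,0) (3*1^2*t) * X (1,1,0) (2*1*t)) := by
      have h3' := h3 1 t
      rw [hXneg _ mP1, hXneg _ mP2, hXneg _ mQ] at h3'
      calc ⁅X (1,0,0) t, X (0,1,0) (1:R)⁆
          = ⁅X (0,1,0) (1:R), X (1,0,0) t⁆⁻¹ := (commutatorElement_inv _ _).symm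
        _ = ((X (1,1,0) (2*1*t))⁻¹ * (X (1,2,0) (3*1^2*t))⁻¹ * (X (2,1,0) (3*1*t^2))⁻¹)⁻¹ := by
            rw [h3']
        _ = _ := by simp only [mul_inv_rev, inv_inv, mul_assoc]
    rw [e2]
    simp only [mul_assoc]
  -- the three nested commutator computations
  have d1 : ∀ x u : R, ⁅X (1,1,0) x * X (0,1,0) (1:R), X (0,0,1) u⁆
      = X (1,2,1) (3*ε*ε'*u*x) * Gam X u := by
    intro x u
    rw [commEl_mul, hGam, starB,
      commutatorElement_eq_one_iff_mul_comm.mpr (cP1L x u).eq, mul_one]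
  have d2 : ∀ b x u : R, ⁅X (1,2,0) b * (X (1,1,0) x * X (0,1,0) (1:R)), X (0,0,1) u⁆
      = X (1,2,1) (3*ε*ε'*u*x + -(ε'*u*b)) * Gam X u := by
    intro b x u
    rw [commEl_mul, d1, hP2L]
    simp only [mul_assoc, swW _ mP2, swP2Gam, mul_inv_cancel_left, swGamW0, addW]
  have d3 : ∀ a b x u : R,
      ⁅X (2,1,0) a * (X (1,2,0) b * (X (1,1,0) x * X (0,1,0) (1:R))), X (0,0,1) u⁆
      = X (1,2,1) (3*ε*ε'*u*x + -(ε'*u*b)) * Gam X u := by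
    intro a b x u
    rw [commEl_mul, d2, hcent (2,1,0) (by simp) (0,0,1) mL a u, mul_one]
    simp only [mul_assoc, swW _ mQ, swQGam, mul_inv_cancel_left, mul_inv_cancel, mul_one]
  -- E1 : conjugation of Γ by X_α(t), first form
  have conjA : ∀ t u : R, X (1,0,0) t * Gam X u * (X (1,0,0) t)⁻¹
      = X (1,2,1) ((6*ε*ε' - 3*ε')*t*u) * Gam X u := by
    intro t u
    have e1 := conj_commEl (X (1,0,0) t) (X (0,1,0) (1:R)) (X (0,0,1) u)
    rw [hGam, conj_of_comm (cAL t u).eq, hAS1, d3] at e1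
    rw [e1]
    have harg : 3*ε*ε'*u*(2*1*t) + -(ε'*u*(3*1^2*t)) = (6*ε*ε' - 3*ε')*t*u := by ring
    rw [harg]
  -- main computation
  have key : ∀ t u : R, X (1,0,0) t * X (0,1,1) (-u) * (X (1,0,0) t)⁻¹
      = X (1,2,1) ((6*ε*ε' - 3*ε')*t*u - 3*t*u) * X (0,1,1) (-u) := by
    intro t u
    have E2 : X (1,0,0) t * Gam X u * (X (1,0,0) t)⁻¹
        = X (1,2,1) (3*t*u) * (X (0,2,1) u *
          ((X (1,0,0) t * X (0,1,1) (-u) * (X (1,0,0) t)⁻¹) *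
            (X (0,3,1) u * X (0,3,2) (-(u^2))))) := by
      unfold Gam
      rw [conj_mul_dist, conj_mul_dist, conj_mul_dist,
        conj_eq_commEl_mul (X (1,0,0) t) (X (0,2,1) u), h2,
        conj_of_comm (cAC3 t u).eq,
        conj_of_comm ((centZ _ mA (-(u^2)) t).symm.eq)]
      simp only [mul_assoc]
    have comb := conjA t u
    rw [E2] at comb
    have comb' : X (1,2,1) (3*t*u) * (X (0,2,1) u *
          ((X (1,0,0) t * X (0,1,1) (-u) * (X (1,0,0) t)⁻¹) *
            (X (0,3,1) u * X (0,3,2) (-(u^2)))))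
        = X (1,2,1) (3*t*u) * (X (0,2,1) u *
          ((X (1,2,1) ((6*ε*ε' - 3*ε')*t*u - 3*t*u) * X (0,1,1) (-u)) *
            (X (0,3,1) u * X (0,3,2) (-(u^2))))) := by
      rw [comb]
      unfold Gam
      simp only [mul_assoc, swW _ mC2, addW]
      congr 2
      ring
    have e3 := mul_left_cancel (mul_left_cancel comb')
    exact mul_right_cancel e3
  have keyComm : ∀ t u : R, ⁅X (1,0,0) t, X (0,1,1) (-u)⁆
      = X (1,2,1) ((6*ε*ε' - 3*ε')*t*u - 3*t*u) := by
    intro t u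
    rw [commutatorElement_def, key t u, hXneg _ mB, mul_inv_cancel_right]
  intro t u
  have h := keyComm t (-u)
  rw [neg_neg] at h
  rw [h]
  have harg : (6*ε*ε' - 3*ε')*t*(-u) - 3*t*(-u) = (3 + 3*ε' - 6*ε*ε')*t*u := by ring
  rw [harg]
end
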